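/- Truthful probability bound: For any noise mechanism D, any edge ε of the PCN, and any sequence of transactions processed so far, the probability that the public balance of ε equals the true balance of ε is at least the utility U(D). -/

import Mathlib

/-!
The reveal choices of successive transactions are independent, and the event that `ε` is
truthful depends on a single one of them: if some transaction was routed through `ε`, it is
the event that the last such transaction revealed `ε`, whose probability is a reveal
probability of `D` and hence at least `U(D)`; otherwise the event is certain, and `U(D) ≤ 1`.
-/

open Finset

/-- A noise mechanism assigns, to each path (indexed by `i : ι`), a probability
distribution over subsets of its oriented-edge set. -/
def ValidMech {V : Type} [Fintype V] [DecidableEq V]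
    {ι : Type} (edges : ι → Finset (V × V))
    (D : ι → Finset (V × V) → ℝ) : Prop :=
  ∀ i, (∀ Q, 0 ≤ D i Q) ∧ (∑ Q ∈ (edges i).powerset, D i Q) = 1 ∧
    ∀ Q, ¬ Q ⊆ edges i → D i Q = 0

/-- Utility U(D): minimum over paths and edges of the reveal probability. -/
noncomputable def Utility {V : Type} [Fintype V] [DecidableEq V]
    {ι : Type} (edges : ι → Finset (V × V))
    (D : ι → Finset (V × V) → ℝ) : ℝ :=
  sInf { x : ℝ | ∃ i : ι, ∃ e ∈ edges i,
    x = ∑ Q ∈ (edges i).powerset.filter (fun Q => e ∈ Q), D i Q }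

section ProductDistribution

variable {κ α : Type*} [Fintype κ] [DecidableEq κ] [Fintype α] {p : κ → α → ℝ}

theorem sum_prod_eq_one_of_sum_eq_one (hp : ∀ k, ∑ a, p k a = 1) :
    ∑ ω : κ → α, ∏ k, p k (ω k) = 1 := by
  rw [← Fintype.prod_sum]
  exact Finset.prod_eq_one fun k _ => hp k

theorem sum_filter_apply_prod_eq (hp : ∀ k, ∑ a, p k a = 1) (k₀ : κ) (P : α → Prop)
    [DecidablePred P] :
    ∑ ω : κ → α with P (ω k₀), ∏ k, p k (ω k) = ∑ a with P a, p k₀ a := by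
  set t : κ → Finset α := Function.update (fun _ => univ) k₀ ({a | P a} : Finset α)
  have hevent : ({ω : κ → α | P (ω k₀)} : Finset (κ → α)) = Fintype.piFinset t := by
    ext ω
    simp only [mem_filter, mem_univ, true_and, Fintype.mem_piFinset, t]
    refine ⟨fun h k => ?_, fun h => by simpa using h k₀⟩
    rcases eq_or_ne k k₀ with rfl | hk
    · simpa using h
    · simp [hk]
  rw [hevent, ← prod_univ_sum, Fintype.prod_eq_single k₀ fun k hk => by simp [t, hk, hp k]]
  simp [t]

end ProductDistribution

theorem IsGreatest.forall_last_imp_iff {κ : Type*} [LinearOrder κ] {R : κ → Prop} {k₀ : κ}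
    (hk₀ : IsGreatest {k | R k} k₀) (X : κ → Prop) :
    (∀ k, (R k ∧ ∀ k', k < k' → ¬ R k') → X k) ↔ X k₀ := by
  have hlast : ∀ k, (R k ∧ ∀ k', k < k' → ¬ R k') ↔ k = k₀ := by
    refine fun k => ⟨fun ⟨hk, hmax⟩ => (hk₀.2 hk).antisymm ?_, ?_⟩
    · exact not_lt.mp fun hlt => hmax k₀ hlt hk₀.1
    · rintro rfl
      exact ⟨hk₀.1, fun k' hlt hk' => (hk₀.2 hk').not_gt hlt⟩
  simp only [hlast, forall_eq]

namespace ValidMech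

variable {V : Type} [Fintype V] [DecidableEq V] {ι : Type} {edges : ι → Finset (V × V)}
  {D : ι → Finset (V × V) → ℝ}

theorem sum_univ_eq_one (hD : ValidMech edges D) (i : ι) : ∑ Q, D i Q = 1 := by
  rw [← (hD i).2.1]
  refine (sum_subset (subset_univ _) fun Q _ hQ => (hD i).2.2 Q ?_).symm
  simpa using hQ

theorem sum_mem_eq_sum_powerset_mem (hD : ValidMech edges D) (i : ι) (e : V × V) :
    ∑ Q with e ∈ Q, D i Q = ∑ Q ∈ (edges i).powerset with e ∈ Q, D i Q := by
  refine (sum_subset (filter_subset_filter _ (subset_univ _)) fun Q hQ hQ' => ?_).symm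
  simp only [mem_filter, mem_powerset, mem_univ, true_and] at hQ hQ'
  exact (hD i).2.2 Q fun h => hQ' ⟨h, hQ⟩

theorem utility_le (hD : ValidMech edges D) {i : ι} {e : V × V} (he : e ∈ edges i) :
    Utility edges D ≤ ∑ Q ∈ (edges i).powerset with e ∈ Q, D i Q := by
  refine csInf_le ⟨0, ?_⟩ ⟨i, e, he, rfl⟩
  rintro x ⟨i', e', _, rfl⟩
  exact sum_nonneg fun Q _ => (hD i').1 Q

theorem utility_le_one (hD : ValidMech edges D) : Utility edges D ≤ 1 := by
  rcases Set.eq_empty_or_nonempty {x : ℝ | ∃ i : ι, ∃ e ∈ edges i,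
      x = ∑ Q ∈ (edges i).powerset with e ∈ Q, D i Q} with hempty | ⟨_, i, e, he, -⟩
  · rw [Utility, hempty, Real.sInf_empty]
    exact zero_le_one
  · calc Utility edges D ≤ ∑ Q ∈ (edges i).powerset with e ∈ Q, D i Q := hD.utility_le he
      _ ≤ ∑ Q ∈ (edges i).powerset, D i Q :=
          sum_le_sum_of_subset_of_nonneg (filter_subset _ _) fun Q _ _ => (hD i).1 Q
      _ = 1 := (hD i).2.1

end ValidMech

theorem truthful_probability_bound
    {V : Type} [Fintype V] [DecidableEq V]
    {ι : Type}
    (edges : ι → Finset (V × V))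
    (D : ι → Finset (V × V) → ℝ) (hD : ValidMech edges D)
    (ps : List ι) (ε : V × V) :
    Utility edges D ≤
      ∑ ω ∈ (Finset.univ : Finset (Fin ps.length → Finset (V × V))).filter
          (fun ω => ∀ j : Fin ps.length,
            (ε ∈ edges (ps.get j) ∧
              ∀ j' : Fin ps.length, j < j' → ε ∉ edges (ps.get j')) → ε ∈ ω j),
        ∏ j, D (ps.get j) (ω j) := by
  have hp : ∀ j, ∑ Q, D (ps.get j) Q = 1 := fun j => hD.sum_univ_eq_one _
  by_cases hhit : ∃ j, ε ∈ edges (ps.get j)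
  · obtain ⟨j₀, hj₀⟩ : ∃ j₀, IsGreatest {j | ε ∈ edges (ps.get j)} j₀ :=
      Set.exists_max_image _ id (Set.toFinite _) hhit
    rw [filter_congr fun ω _ => hj₀.forall_last_imp_iff (fun j => ε ∈ ω j),
      sum_filter_apply_prod_eq hp j₀ (ε ∈ ·), hD.sum_mem_eq_sum_powerset_mem]
    exact hD.utility_le hj₀.1
  · rw [filter_true_of_mem fun ω _ j hj => absurd ⟨j, hj.1⟩ hhit,
      sum_prod_eq_one_of_sum_eq_one hp]
    exact hD.utility_le_one
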